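/- Let G = (V, E) be a finite simple graph and τ : V → ℕ a threshold function with τ(v) ≤ d_G(v) for every v ∈ V, and let G' and x be the multigraph and divisor of the standard construction. Then ts_G(τ) ≥ dist_rec_{G'}(x). -/

import Mathlib

variable {V : Type*} [Fintype V] [DecidableEq V]

/-- The degree of vertex `v` in the multigraph with edge-multiplicity function `m`. -/
def mgDeg (m : V → V → ℕ) (v : V) : ℕ := ∑ u, m v u

/-- The divisor obtained from `f` by firing vertex `v`. -/
def mgFire (m : V → V → ℕ) (f : V → ℤ) (v : V) : V → ℤ :=
  fun u => if u = v then f v - mgDeg m v else f u + m v u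

/-- The divisor obtained from `f` by firing the vertices of `L` in order. -/
def mgPlay (m : V → V → ℕ) (f : V → ℤ) (L : List V) : V → ℤ :=
  L.foldl (mgFire m) f

/-- `L` is a legal game from `f`: each fired vertex is active when fired. -/
def mgLegal (m : V → V → ℕ) : (V → ℤ) → List V → Prop
  | _, [] => True
  | f, v :: L => ((mgDeg m v : ℤ) ≤ f v) ∧ mgLegal m (mgFire m f v) L

/-- A divisor is stable if no vertex is active. -/
def mgStable (m : V → V → ℕ) (f : V → ℤ) : Prop := ∀ v, f v < (mgDeg m v : ℤ)

/-- A divisor is halting if some legal game from it ends at a stable divisor. -/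
def mgHalting (m : V → V → ℕ) (f : V → ℤ) : Prop :=
  ∃ L : List V, mgLegal m f L ∧ mgStable m (mgPlay m f L)

/-- A divisor is recurrent if some non-empty legal game from it leads back to it. -/
def mgRecurrent (m : V → V → ℕ) (f : V → ℤ) : Prop :=
  ∃ L : List V, L ≠ [] ∧ mgLegal m f L ∧ mgPlay m f L = f

/-- A divisor is effective if it is nonnegative everywhere. -/
def mgEffective (f : V → ℤ) : Prop := ∀ v, 0 ≤ f v

/-- The degree of a divisor. -/
def mgDegDiv (f : V → ℤ) : ℤ := ∑ v, f v

/-- Distance of a divisor from a recurrent state. -/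
noncomputable def mgDistRec (m : V → V → ℕ) (f : V → ℤ) : ℕ :=
  sInf {n : ℕ | ∃ g : V → ℤ, mgEffective g ∧ mgDegDiv g = (n : ℤ) ∧ mgRecurrent m (f + g)}

/-- Distance of a divisor from a non-halting state. -/
noncomputable def mgDistNonhalt (m : V → V → ℕ) (f : V → ℤ) : ℕ :=
  sInf {n : ℕ | ∃ g : V → ℤ, mgEffective g ∧ mgDegDiv g = (n : ℤ) ∧ ¬ mgHalting m (f + g)}

/-- A multigraph is connected if any two vertices are joined by a path of
positive-multiplicity edges. -/
def mgConnected (m : V → V → ℕ) : Prop :=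
  ∀ u v : V, Relation.ReflTransGen (fun a b => 0 < m a b) u v

/-- `f` and `g` are linearly equivalent: `f` can be transformed to `g` by firings. -/
def mgLinEquiv (m : V → V → ℕ) (f g : V → ℤ) : Prop :=
  ∃ L : List V, mgPlay m f L = g

/-- A divisor is winnable if it is linearly equivalent to an effective divisor. -/
def mgWinnable (m : V → V → ℕ) (f : V → ℤ) : Prop :=
  ∃ g : V → ℤ, mgEffective g ∧ mgLinEquiv m f g

/-- The rank of a divisor. -/
noncomputable def mgRank (m : V → V → ℕ) (f : V → ℤ) : ℤ :=
  ((sInf {n : ℕ | ∃ g : V → ℤ, mgEffective g ∧ mgDegDiv g = (n : ℤ) ∧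
    ¬ mgWinnable m (f - g)} : ℕ) : ℤ) - 1

/-- One round of the activation process: every vertex with at least `τ v`
active neighbors becomes active (and active vertices stay active). -/
def tssStep (G : SimpleGraph V) [DecidableRel G.Adj] (τ : V → ℕ) (A : Finset V) : Finset V :=
  A ∪ Finset.univ.filter (fun v => τ v ≤ (A.filter (fun u => G.Adj v u)).card)

/-- `S` is a target set: the activation process starting from `S` eventually
activates all vertices. -/
def tssIsTargetSet (G : SimpleGraph V) [DecidableRel G.Adj] (τ : V → ℕ) (S : Finset V) : Prop :=
  ∃ n : ℕ, (tssStep G τ)^[n] S = Finset.univ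

/-- Minimum cardinality of a target set. -/
noncomputable def tssMin (G : SimpleGraph V) [DecidableRel G.Adj] (τ : V → ℕ) : ℕ :=
  sInf {k : ℕ | ∃ S : Finset V, tssIsTargetSet G τ S ∧ S.card = k}

/-- Auxiliary (one-directional) edge multiplicities of the standard construction.
In the vertex type `(V ⊕ V ⊕ V) ⊕ G.Dart`, the first, second and third summands
of `V ⊕ V ⊕ V` encode `v_i`, `v_c`, `v_o` respectively, and a dart `d = (u, v)`
encodes the vertex `p_{uv}`. -/
def consAux (G : SimpleGraph V) [DecidableRel G.Adj] (N : ℕ) :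
    (V ⊕ V ⊕ V) ⊕ G.Dart → (V ⊕ V ⊕ V) ⊕ G.Dart → ℕ
  | Sum.inl (Sum.inl v), Sum.inl (Sum.inr (Sum.inl w)) => if v = w then N else 0
  | Sum.inl (Sum.inr (Sum.inl v)), Sum.inl (Sum.inr (Sum.inr w)) => if v = w then 1 else 0
  | Sum.inl (Sum.inr (Sum.inr v)), Sum.inr d => if d.toProd.1 = v then N else 0
  | Sum.inr d, Sum.inl (Sum.inl v) => if d.toProd.2 = v then 1 else 0
  | _, _ => 0

/-- Edge-multiplicity function of the multigraph `G'` of the standard construction: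
`N` parallel edges between `v_i` and `v_c`, one edge between `v_c` and `v_o`, and,
for each edge `uv` of `G`, `N` parallel edges between `u_o` and `p_{uv}` and one
edge between `p_{uv}` and `v_i`. -/
def consM (G : SimpleGraph V) [DecidableRel G.Adj] (N : ℕ)
    (a b : (V ⊕ V ⊕ V) ⊕ G.Dart) : ℕ :=
  consAux G N a b + consAux G N b a

/-- The divisor `x` of the standard construction: `x(v_i) = d_G(v) + N - τ(v)`,
`x(v_c) = 1`, `x(v_o) = N * d_G(v)`, and `x(p) = 1` for every vertex `p_{uv}`. -/
def consX (G : SimpleGraph V) [DecidableRel G.Adj] (τ : V → ℕ) (N : ℕ) :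
    (V ⊕ V ⊕ V) ⊕ G.Dart → ℤ
  | Sum.inl (Sum.inl v) => (G.degree v : ℤ) + N - τ v
  | Sum.inl (Sum.inr (Sum.inl _)) => 1
  | Sum.inl (Sum.inr (Sum.inr v)) => (N : ℤ) * G.degree v
  | Sum.inr _ => 1

/-!
Let `S` be a minimum target set and add one chip at `v_o` for every seed `v ∈ S`. Firing every
vertex of `G'` exactly once returns a divisor to itself, so it suffices to fire all vertices once
in a legal order. The seeds first fire `v_o`, active thanks to the extra chip, and their ports
`p_{vu}`. Then, following the activation process, a vertex `v` activated in round `t` fires `v_i`,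
which has received one chip from the port `p_{uv}` of each of its at least `τ(v)` neighbours `u`
active before round `t`, and then `v_c`, `v_o` and its ports. Finally the seeds fire `v_i`, fed by
all `d(v) ≥ τ(v)` ports, and `v_c`.
-/

open scoped Finset

section ChipFiring

variable {m : V → V → ℕ}

lemma mgPlay_apply (hm : ∀ v, m v v = 0) (f : V → ℤ) (L : List V) (v : V) :
    mgPlay m f L v = f v + (L.map fun u => (m u v : ℤ)).sum - L.count v * mgDeg m v := by
  induction L generalizing f with
  | nil => simp [mgPlay]
  | cons a L ih =>
    change mgPlay m (mgFire m f a) L v = _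
    rw [ih]
    by_cases h : v = a
    · subst h
      simp only [mgFire, List.map_cons, List.sum_cons, List.count_cons_self, hm]
      push_cast
      ring
    · simp only [mgFire, if_neg h, List.map_cons, List.sum_cons,
        List.count_cons_of_ne (Ne.symm h)]
      ring

lemma mgLegal_of_nodup {f : V → ℤ} {L : List V} (hL : L.Nodup)
    (h : ∀ P w Q, L = P ++ w :: Q →
      (mgDeg m w : ℤ) ≤ f w + (P.map fun u => (m u w : ℤ)).sum) :
    mgLegal m f L := by
  induction L generalizing f with
  | nil => trivial
  | cons a L ih =>
    obtain ⟨ha, hL⟩ := List.nodup_cons.mp hL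
    refine ⟨by simpa using h [] a L rfl, ih hL fun P w Q hPQ => ?_⟩
    have hwa : w ≠ a := by rintro rfl; exact ha (by simp [hPQ])
    have := h (a :: P) w Q (by simp [hPQ])
    simp only [List.map_cons, List.sum_cons] at this
    simp only [mgFire, if_neg hwa]
    linarith

lemma mgPlay_eq_self_of_nodup (hsymm : ∀ u v, m u v = m v u) (hm : ∀ v, m v v = 0)
    (f : V → ℤ) {L : List V} (hL : L.Nodup) (hmem : ∀ v, v ∈ L) : mgPlay m f L = f := by
  have hL_univ : L.toFinset = Finset.univ := Finset.eq_univ_of_forall fun v => by simp [hmem]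
  funext v
  rw [mgPlay_apply hm, List.count_eq_one_of_mem hL (hmem v), ← List.sum_toFinset _ hL, hL_univ]
  simp only [mgDeg, Nat.cast_sum, hsymm _ v]
  ring

/-- The witnessing game fires all vertices in order of increasing rank. -/
theorem mgRecurrent_of_rank [Nonempty V] (hsymm : ∀ u v, m u v = m v u) (hm : ∀ v, m v v = 0)
    {f : V → ℤ} (r : V → ℕ)
    (hr : ∀ w, (mgDeg m w : ℤ) ≤ f w + ∑ u with r u < r w, (m u w : ℤ)) :
    mgRecurrent m f := by
  set L := Finset.univ.toList.mergeSort fun a b => r a ≤ r b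
  have hmem : ∀ v, v ∈ L := by simp [L]
  have hL : L.Nodup := (List.mergeSort_perm _ _).nodup_iff.mpr (Finset.nodup_toList _)
  have hsorted : L.Pairwise fun a b => r a ≤ r b := by
    simpa using List.pairwise_mergeSort (le := fun a b => decide (r a ≤ r b))
      (fun a b c hab hbc => by simp at *; omega) (fun a b => by simp; omega) Finset.univ.toList
  refine ⟨L, List.ne_nil_of_mem (hmem (Classical.arbitrary V)), mgLegal_of_nodup hL ?_,
    mgPlay_eq_self_of_nodup hsymm hm f hL hmem⟩
  intro P w Q hPQ
  have hP : P.Nodup := (hPQ ▸ hL).sublist (List.sublist_append_left _ _)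
  have hlower : ∀ u, r u < r w → u ∈ P.toFinset := by
    intro u hu
    have hwQ : ∀ x ∈ w :: Q, r w ≤ r x := by
      have := List.Pairwise.sublist (List.sublist_append_right P (w :: Q)) (hPQ ▸ hsorted)
      simpa using (List.pairwise_cons.mp this).1
    have : u ∈ P ++ w :: Q := hPQ ▸ hmem u
    rcases List.mem_append.mp this with h | h
    · exact List.mem_toFinset.mpr h
    · exact absurd (hwQ u h) (by omega)
  calc (mgDeg m w : ℤ) ≤ f w + ∑ u with r u < r w, (m u w : ℤ) := hr w
    _ ≤ f w + (P.map fun u => (m u w : ℤ)).sum := by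
      rw [← List.sum_toFinset _ hP]
      gcongr
      exact fun u hu => hlower u (Finset.mem_filter.mp hu).2

end ChipFiring

section Activation

variable {G : SimpleGraph V} [DecidableRel G.Adj] {τ : V → ℕ} {S : Finset V}

lemma tssIsTargetSet.exists_mem_iterate (hS : tssIsTargetSet G τ S) (v : V) :
    ∃ k, v ∈ (tssStep G τ)^[k] S :=
  let ⟨n, hn⟩ := hS
  ⟨n, hn ▸ Finset.mem_univ v⟩

noncomputable def tssIsTargetSet.time (hS : tssIsTargetSet G τ S) (v : V) : ℕ :=
  Nat.find (hS.exists_mem_iterate v)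

lemma tssIsTargetSet.time_le_of_mem (hS : tssIsTargetSet G τ S) {v : V} {k : ℕ}
    (h : v ∈ (tssStep G τ)^[k] S) : hS.time v ≤ k :=
  Nat.find_min' _ h

lemma tssIsTargetSet.time_eq_zero_iff (hS : tssIsTargetSet G τ S) {v : V} :
    hS.time v = 0 ↔ v ∈ S := by
  simp [tssIsTargetSet.time, Nat.find_eq_zero]

lemma tssIsTargetSet.threshold_le_card_earlier (hS : tssIsTargetSet G τ S) {v : V}
    (hv : v ∉ S) : τ v ≤ #{u ∈ G.neighborFinset v | hS.time u < hS.time v} := by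
  obtain ⟨k, hk⟩ := Nat.exists_eq_succ_of_ne_zero (mt hS.time_eq_zero_iff.mp hv)
  have hactive : v ∈ tssStep G τ ((tssStep G τ)^[k] S) := by
    have : v ∈ (tssStep G τ)^[hS.time v] S := Nat.find_spec (hS.exists_mem_iterate v)
    rwa [hk, Function.iterate_succ_apply'] at this
  have hinactive : v ∉ (tssStep G τ)^[k] S :=
    Nat.find_min (hS.exists_mem_iterate v) (show k < hS.time v by omega)
  simp only [tssStep, Finset.mem_union, hinactive, false_or, Finset.mem_filter,
    Finset.mem_univ, true_and] at hactive
  refine hactive.trans (Finset.card_le_card fun u hu => ?_)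
  simp only [Finset.mem_filter, SimpleGraph.mem_neighborFinset] at hu ⊢
  exact ⟨hu.2, hk ▸ Nat.lt_succ_of_le (hS.time_le_of_mem hu.1)⟩

end Activation

section Darts

variable (G : SimpleGraph V) [DecidableRel G.Adj]

lemma SimpleGraph.card_dart_snd_filter_eq (v : V) (p : V → Prop) [DecidablePred p] :
    #{d : G.Dart | d.snd = v ∧ p d.fst} = #{u ∈ G.neighborFinset v | p u} := by
  refine Finset.card_nbij (·.fst) (fun d hd => ?_) (fun d₁ hd₁ d₂ hd₂ h => ?_)
    fun u hu => ?_
  · simp only [Finset.coe_filter, Finset.mem_univ, true_and, Set.mem_ofPred_eq] at hd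
    simpa [← hd.1, hd.2] using d.adj.symm
  · simp only [Finset.coe_filter, Finset.mem_univ, true_and, Set.mem_ofPred_eq] at hd₁ hd₂
    exact SimpleGraph.Dart.ext _ _ (Prod.ext h (hd₁.1.trans hd₂.1.symm))
  · simp only [Finset.coe_filter, SimpleGraph.mem_neighborFinset, Set.mem_ofPred_eq] at hu
    exact ⟨⟨(u, v), hu.1.symm⟩, by simpa using hu.2, rfl⟩

end Darts

section Construction

variable (G : SimpleGraph V) [DecidableRel G.Adj] (N : ℕ)

lemma mgDeg_consM_in (v : V) : mgDeg (consM G N) (.inl (.inl v)) = N + G.degree v := by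
  simpa [mgDeg, consM, consAux, Fintype.sum_sum_type] using
    G.card_dart_snd_filter_eq v fun _ => True

lemma mgDeg_consM_center (v : V) : mgDeg (consM G N) (.inl (.inr (.inl v))) = N + 1 := by
  simp [mgDeg, consM, consAux, Fintype.sum_sum_type, add_comm]

lemma mgDeg_consM_out (v : V) :
    mgDeg (consM G N) (.inl (.inr (.inr v))) = 1 + N * G.degree v := by
  simp [mgDeg, consM, consAux, Fintype.sum_sum_type, ← Finset.sum_filter,
    G.dart_fst_fiber_card_eq_degree, add_comm, mul_comm]

lemma mgDeg_consM_port (d : G.Dart) : mgDeg (consM G N) (.inr d) = N + 1 := by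
  simp [mgDeg, consM, consAux, Fintype.sum_sum_type, add_comm]

lemma card_neighbor_filter_le_sum_consM (v : V) (p : V → Prop) [DecidablePred p]
    (T : Finset ((V ⊕ V ⊕ V) ⊕ G.Dart))
    (hT : ∀ d : G.Dart, d.snd = v → p d.fst → .inr d ∈ T) :
    (#{u ∈ G.neighborFinset v | p u} : ℤ) ≤
      ∑ x ∈ T, (consM G N x (.inl (.inl v)) : ℤ) := by
  rw [← G.card_dart_snd_filter_eq]
  calc (#{d : G.Dart | d.snd = v ∧ p d.fst} : ℤ)
      = ∑ d : G.Dart with d.snd = v ∧ p d.fst, (consM G N (.inr d) (.inl (.inl v)) : ℤ) := by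
        rw [Finset.card_eq_sum_ones, Nat.cast_sum]
        refine Finset.sum_congr rfl fun d hd => ?_
        simp [consM, consAux, (Finset.mem_filter.mp hd).2.1]
    _ = ∑ x ∈ ({d : G.Dart | d.snd = v ∧ p d.fst} : Finset G.Dart).map .inr,
          (consM G N x (.inl (.inl v)) : ℤ) := by
        rw [Finset.sum_map]; rfl
    _ ≤ ∑ x ∈ T, (consM G N x (.inl (.inl v)) : ℤ) := by
        refine Finset.sum_le_sum_of_subset_of_nonneg (fun x hx => ?_) fun _ _ _ => by positivity
        obtain ⟨d, hd, rfl⟩ := Finset.mem_map.mp hx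
        simp only [Finset.mem_filter, Finset.mem_univ, true_and] at hd
        exact hT d hd.1 hd.2

def seedDivisor (S : Finset V) : (V ⊕ V ⊕ V) ⊕ G.Dart → ℤ
  | .inl (.inr (.inr v)) => if v ∈ S then 1 else 0
  | _ => 0

omit [Fintype V] [DecidableRel G.Adj] in
lemma mgEffective_seedDivisor (S : Finset V) : mgEffective (seedDivisor G S) := by
  rintro ((v | v | v) | d) <;> simp only [seedDivisor] <;> positivity

lemma mgDegDiv_seedDivisor (S : Finset V) : mgDegDiv (seedDivisor G S) = #S := by
  simp [mgDegDiv, seedDivisor, Fintype.sum_sum_type]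

/-- `t` is the activation time and `n` bounds it, so the rank `4 (n + 1)` puts the `v_i` and `v_c`
of the seeds last. -/
def consRank (S : Finset V) (t : V → ℕ) (n : ℕ) : (V ⊕ V ⊕ V) ⊕ G.Dart → ℕ
  | .inl (.inl v) => 4 * (if v ∈ S then n + 1 else t v)
  | .inl (.inr (.inl v)) => 4 * (if v ∈ S then n + 1 else t v) + 1
  | .inl (.inr (.inr v)) => 4 * t v + 2
  | .inr d => 4 * t d.fst + 3

variable {G} {τ : V → ℕ} {S : Finset V}

theorem mgRecurrent_consX_add_seedDivisor [Nonempty V] (hτ : ∀ v, τ v ≤ G.degree v)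
    (hS : tssIsTargetSet G τ S) :
    mgRecurrent (consM G N) (consX G τ N + seedDivisor G S) := by
  obtain ⟨n, hn⟩ := id hS
  have ht : ∀ v, hS.time v ≤ n := fun v => hS.time_le_of_mem (hn ▸ Finset.mem_univ v)
  set r := consRank G S hS.time n
  have hearlier : ∀ a w k, r a < r w → consM G N a w = k →
      (k : ℤ) ≤ ∑ u with r u < r w, (consM G N u w : ℤ) := fun a w k h hk =>
    hk ▸ Finset.single_le_sum (f := fun u => (consM G N u w : ℤ)) (fun _ _ => by positivity)
      (by simpa using h)
  refine mgRecurrent_of_rank (m := consM G N) (fun _ _ => Nat.add_comm _ _)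
    (by rintro ((v | v | v) | d) <;> rfl) r ?_
  rintro ((v | v | v) | d)
  · set s := if v ∈ S then n + 1 else hS.time v
    have hports := card_neighbor_filter_le_sum_consM G N v (fun u => hS.time u < s)
      {u | r u < r (.inl (.inl v))} fun d _ hd => by
        simp only [Finset.mem_filter, Finset.mem_univ, true_and]
        change 4 * _ + 3 < 4 * s
        omega
    have hτ_le : τ v ≤ #{u ∈ G.neighborFinset v | hS.time u < s} := by
      by_cases hv : v ∈ S
      · simpa [s, hv, Nat.lt_succ_of_le (ht _)] using hτ v
      · simpa [s, hv] using hS.threshold_le_card_earlier hv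
    simp only [mgDeg_consM_in, Pi.add_apply, consX, seedDivisor]
    omega
  · have hin := hearlier (.inl (.inl v)) (.inl (.inr (.inl v))) N (by simp [r, consRank])
      (by simp [consM, consAux])
    simp only [mgDeg_consM_center, Pi.add_apply, consX, seedDivisor]
    omega
  · by_cases hv : v ∈ S
    · have hnonneg : (0 : ℤ) ≤ ∑ u with r u < r (.inl (.inr (.inr v))),
          (consM G N u (.inl (.inr (.inr v))) : ℤ) := Finset.sum_nonneg fun _ _ => by positivity
      simp only [mgDeg_consM_out, Pi.add_apply, consX, seedDivisor, hv, if_true]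
      omega
    · have hcenter := hearlier (.inl (.inr (.inl v))) (.inl (.inr (.inr v))) 1
        (by simp [r, consRank, hv]) (by simp [consM, consAux])
      simp only [mgDeg_consM_out, Pi.add_apply, consX, seedDivisor, hv, if_false]
      omega
  · have hout := hearlier (.inl (.inr (.inr d.fst))) (.inr d) N (by simp [r, consRank])
      (by simp [consM, consAux])
    simp only [mgDeg_consM_port, Pi.add_apply, consX, seedDivisor]
    omega

end Construction

/-- `ts_G(τ) ≥ dist_rec_{G'}(x)` for the standard construction with
`N = |V| + 2`. -/
theorem stmt8 [Nonempty V] (G : SimpleGraph V) [DecidableRel G.Adj] (τ : V → ℕ)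
    (hτ : ∀ v, τ v ≤ G.degree v) :
    mgDistRec (consM G (Fintype.card V + 2)) (consX G τ (Fintype.card V + 2)) ≤
      tssMin G τ := by
  obtain ⟨S, hS, hcard⟩ :
      tssMin G τ ∈ {k | ∃ S : Finset V, tssIsTargetSet G τ S ∧ #S = k} :=
    Nat.sInf_mem ⟨_, Finset.univ, ⟨0, rfl⟩, rfl⟩
  rw [← hcard]
  exact Nat.sInf_le ⟨seedDivisor G S, mgEffective_seedDivisor G S, mgDegDiv_seedDivisor G S,
    mgRecurrent_consX_add_seedDivisor _ hτ hS⟩
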